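/- Main theorem (classical Hagiwara decoding): Let c be a classical Hagiwara codeword based on a t-erasure-correcting code, and let y be obtained from c by t_d deletions and t_i insertions with t_d, t_i ≥ 1 and t_d + t_i ≤ t. Let P_e be the set of block indices that Algorithm 1 marks as erased and P_s the set of block indices b not marked as erased such that the extracted block y_{[β_b + l_b + 1, β_b + l_b + E]} differs from c_b. Then |P_e| + 2|P_s| ≤ t, and for every block b ∉ P_e ∪ P_s the algorithm outputs the correct block c_b. -/

import Mathlib

/-- Deletion at a 1-indexed position set `J`. -/
def del {α : Type*} (x : List α) (J : Finset ℕ) : List α :=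
  (((x.zipIdx 1).map Prod.swap).filter (fun p => decide (p.1 ∉ J))).map Prod.snd

/-- The marker `0^t 1^t`. -/
def marker (t : ℕ) : List Bool :=
  List.replicate t false ++ List.replicate t true

/-- Hagiwara encoding: append the marker after each block and concatenate. -/
def hag (t : ℕ) (blocks : List (List Bool)) : List Bool :=
  (blocks.map (fun cb => cb ++ marker t)).flatten

/-- The pattern `0^{τd+l} 1^{τi−l}`. -/
def pat (τd τi : ℕ) (l : ℤ) : List Bool :=
  List.replicate ((τd : ℤ) + l).toNat false ++
    List.replicate ((τi : ℤ) - l).toNat true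

/-- The window `y_b` of `y` around the `b`-th marker (1-indexed block `b`):
the symbols at positions `γ_b − τd + 1, ..., γ_b + τi` where
`γ_b = (E+2t)(b−1) + E + t`. -/
def window (E t τd τi : ℕ) (y : List Bool) (b : ℕ) : List Bool :=
  (y.drop ((E + 2 * t) * (b - 1) + E + t - τd)).take (τd + τi)

/-- One step of Algorithm 1 on the pair of counters `(u, v)`. -/
def stepUV (E t τd τi : ℕ) (y : List Bool) (b : ℕ) (s : ℕ × ℕ) : ℕ × ℕ :=
  let l : ℤ := (s.2 : ℤ) - (s.1 : ℤ)
  let w := window E t τd τi y b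
  if w = pat τd τi l then s
  else
    match (List.range (τd + τi + 1)).find?
        (fun n : ℕ => n != 0 && (w == pat τd τi (l - (n : ℤ)))) with
    | some n => ((s.1 + n : ℕ), s.2)
    | none => (s.1, s.2 + 1)

/-- The counters `(u_b, v_b)` of Algorithm 1 after processing blocks `1, ..., b`. -/
def uv (E t τd τi : ℕ) (y : List Bool) : ℕ → ℕ × ℕ
  | 0 => (0, 0)
  | b + 1 => stepUV E t τd τi y (b + 1) (uv E t τd τi y b)

/-- The block extracted by Algorithm 1 for block `b` (Line 6):
the symbols of `y` at positions `β_b + l_b + 1, ..., β_b + l_b + E`. -/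
def extractBlock (E t τd τi : ℕ) (y : List Bool) (b : ℕ) : List Bool :=
  (y.drop ((((E + 2 * t) * (b - 1) : ℕ) : ℤ) +
      (((uv E t τd τi y b).2 : ℤ) - ((uv E t τd τi y b).1 : ℤ))).toNat).take E

/-- The `b`-th block of the codeword `c`. -/
def cBlock (E t : ℕ) (c : List Bool) (b : ℕ) : List Bool :=
  (c.drop ((E + 2 * t) * (b - 1))).take E

/-!
Align `y` with `c`: position `P` of `c` corresponds to the shortest prefix of `y` with as many
surviving symbols, and the true offset there is the number of insertions minus the number of
deletions so far. Near each marker the surviving symbols of `y` form a step `0…01…1` at the aligned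
midpoint, so a window matching a pattern determines the true offset up to the insertions inside the
window. Charge each erased block `1` and each wrongly extracted block `2`. Then
`cost so far + |true offset − decoder's offset|` never exceeds the number of edits so far: in each
block the decoder either realigns with the marker or pays for the edits that prevent it, and a wrong
extraction needs a wrong offset or an edit inside the data block. So the total cost is at most
`td + ti ≤ t`.
-/

namespace Hagiwara

def countMem (S : Finset ℕ) (q : ℕ) : ℕ :=
  (List.range' 1 q).countP (fun p => decide (p ∈ S))

def countNotMem (S : Finset ℕ) (q : ℕ) : ℕ :=
  (List.range' 1 q).countP (fun p => decide (p ∉ S))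

section Counting

variable (S : Finset ℕ)

lemma range'_one_add (a n : ℕ) :
    List.range' 1 (a + n) = List.range' 1 a ++ (List.range' a n).map (· + 1) := by
  have h : (List.range' a n).map (· + 1) = List.range' (1 + a) n := by
    simpa only [Nat.add_comm _ 1] using List.map_add_range' (a := 1) a n 1
  rw [h, List.range'_append_1]

lemma countMem_add (a n : ℕ) :
    countMem S (a + n) =
      countMem S a + (List.range' a n).countP (fun j => decide (j + 1 ∈ S)) := by
  rw [countMem, range'_one_add, List.countP_append, List.countP_map, countMem]
  rfl

lemma countNotMem_add (a n : ℕ) :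
    countNotMem S (a + n) =
      countNotMem S a + (List.range' a n).countP (fun j => decide (j + 1 ∉ S)) := by
  rw [countNotMem, range'_one_add, List.countP_append, List.countP_map, countNotMem]
  rfl

lemma countMem_succ (q : ℕ) : countMem S (q + 1) = countMem S q + if q + 1 ∈ S then 1 else 0 := by
  rw [countMem_add]
  by_cases h : q + 1 ∈ S <;> simp [h]

lemma countNotMem_succ (q : ℕ) :
    countNotMem S (q + 1) = countNotMem S q + if q + 1 ∈ S then 0 else 1 := by
  rw [countNotMem_add]
  by_cases h : q + 1 ∈ S <;> simp [h]

lemma countNotMem_add_countMem (q : ℕ) : countNotMem S q + countMem S q = q := by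
  have h := List.length_eq_countP_add_countP (fun p => decide (p ∈ S)) (l := List.range' 1 q)
  simp only [List.length_range', decide_eq_true_eq, decide_not] at h
  simp only [countNotMem, countMem, decide_not]
  omega

lemma countMem_mono : Monotone (countMem S) :=
  monotone_nat_of_le_succ fun q => by rw [countMem_succ]; omega

lemma countNotMem_mono : Monotone (countNotMem S) :=
  monotone_nat_of_le_succ fun q => by rw [countNotMem_succ]; omega

lemma countMem_le_card (q : ℕ) : countMem S q ≤ S.card := by
  rw [countMem, List.countP_eq_length_filter,
    ← List.toFinset_card_of_nodup (List.Nodup.filter _ List.nodup_range')]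
  exact Finset.card_le_card fun p hp => by simp_all

lemma not_mem_of_countMem_eq {a b p : ℕ} (h : countMem S b = countMem S a)
    (hap : a < p) (hpb : p ≤ b) : p ∉ S := by
  intro hp
  have h1 := countMem_mono S (show a ≤ p - 1 by omega)
  have h2 := countMem_mono S hpb
  have h3 := countMem_succ S (p - 1)
  rw [Nat.sub_add_cancel (by omega), if_pos hp] at h3
  omega

lemma le_iff_countNotMem_le {b : ℕ} (hb : 1 ≤ b) (hbS : b ∉ S) (a : ℕ) :
    b ≤ a ↔ countNotMem S b ≤ countNotMem S a := by
  refine ⟨fun h => countNotMem_mono S h, fun h => ?_⟩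
  by_contra! hab
  have h1 := countNotMem_succ S (b - 1)
  rw [Nat.sub_add_cancel hb, if_neg hbS] at h1
  have := countNotMem_mono S (show a ≤ b - 1 by omega)
  omega

lemma eq_of_countNotMem_eq {a b : ℕ} (ha : 1 ≤ a) (haS : a ∉ S) (hb : 1 ≤ b) (hbS : b ∉ S)
    (h : countNotMem S a = countNotMem S b) : a = b :=
  le_antisymm ((le_iff_countNotMem_le S ha haS b).2 h.le)
    ((le_iff_countNotMem_le S hb hbS a).2 h.ge)

lemma exists_countNotMem_eq {len k : ℕ} (h : k < countNotMem S len) :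
    ∃ q < len, q + 1 ∉ S ∧ countNotMem S q = k := by
  have hex : ∃ n, k < countNotMem S (n + 1) :=
    ⟨len, lt_of_lt_of_le h (countNotMem_mono S (Nat.le_succ len))⟩
  classical
  set q := Nat.find hex
  have hq : k < countNotMem S (q + 1) := Nat.find_spec hex
  have hq_le : countNotMem S q ≤ k := by
    rcases Nat.eq_zero_or_pos q with h0 | h0
    · simp [h0, countNotMem]
    · have := Nat.find_min hex (show q - 1 < q by omega)
      rwa [Nat.sub_add_cancel h0, not_lt] at this
  have hsucc := countNotMem_succ S q
  have hqS : q + 1 ∉ S := fun hm => by rw [if_pos hm] at hsucc; omega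
  rw [if_neg hqS] at hsucc
  refine ⟨q, ?_, hqS, by omega⟩
  by_contra! hc
  have := countNotMem_mono S hc
  omega

end Counting

def delFrom {α : Type*} (m : ℕ) (x : List α) (S : Finset ℕ) : List α :=
  (((x.zipIdx m).map Prod.swap).filter (fun p => decide (p.1 ∉ S))).map Prod.snd

section Deletion

variable {α : Type*} (S : Finset ℕ)

lemma delFrom_cons (m : ℕ) (a : α) (x : List α) :
    delFrom m (a :: x) S = if m ∈ S then delFrom (m + 1) x S else a :: delFrom (m + 1) x S := by
  by_cases h : m ∈ S <;> simp [delFrom, List.zipIdx_cons, h]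

lemma length_delFrom (x : List α) (m : ℕ) :
    (delFrom m x S).length = (List.range' m x.length).countP (fun p => decide (p ∉ S)) := by
  induction x generalizing m with
  | nil => simp [delFrom]
  | cons a x ih =>
    rw [delFrom_cons, List.length_cons, List.range'_succ, List.countP_cons]
    by_cases h : m ∈ S <;> simp [h, ih]

lemma getElem?_delFrom (x : List α) (m q : ℕ) (hq : q < x.length) (hS : m + q ∉ S) :
    (delFrom m x S)[(List.range' m q).countP (fun p => decide (p ∉ S))]? = x[q]? := by
  induction x generalizing m q with
  | nil => simp at hq
  | cons a x ih =>
    rw [delFrom_cons]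
    cases q with
    | zero => simp_all
    | succ q =>
      have ih' := ih (m + 1) q (by simpa using hq) (by rwa [Nat.add_right_comm, Nat.add_assoc])
      rw [List.range'_succ, List.countP_cons]
      by_cases h : m ∈ S <;> simp_all

lemma length_del (x : List α) : (del x S).length = countNotMem S x.length :=
  length_delFrom S x 1

lemma getElem?_del (x : List α) {q : ℕ} (hq : q < x.length) (hS : q + 1 ∉ S) :
    (del x S)[countNotMem S q]? = x[q]? :=
  getElem?_delFrom S x 1 q hq (by rwa [Nat.add_comm])

end Deletion

lemma getElem?_take_drop {α : Type*} (L : List α) (s n j : ℕ) :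
    ((L.drop s).take n)[j]? = if j < n then L[s + j]? else none := by
  rw [List.getElem?_take]
  by_cases h : j < n <;> simp [h, List.getElem?_drop]

lemma count_take_drop (L : List Bool) (a : Bool) (n s : ℕ) (h : s + n ≤ L.length) :
    ((L.drop s).take n).count a = (List.range' s n).countP (fun j => L.getD j false == a) := by
  induction n generalizing s with
  | zero => simp
  | succ n ih =>
    have e : (L.drop s).take (n + 1) = (L.drop s).take n ++ [L.getD (s + n) false] := by
      rw [List.take_add_one, List.getElem?_drop, List.getD_eq_getElem L false (by omega),
        List.getElem?_eq_getElem (by omega)]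
      rfl
    rw [e, List.count_append, List.range'_concat, List.countP_append, ih s (by omega)]
    simp [List.count_cons, List.countP_cons]

section Encoding

lemma hag_cons (t : ℕ) (cb : List Bool) (bl : List (List Bool)) :
    hag t (cb :: bl) = (cb ++ marker t) ++ hag t bl := by
  simp [hag]

lemma length_hag (t E : ℕ) (bl : List (List Bool)) (h : ∀ cb ∈ bl, cb.length = E) :
    (hag t bl).length = bl.length * (E + 2 * t) := by
  induction bl with
  | nil => simp [hag]
  | cons cb bl ih =>
    rw [hag_cons, List.length_append, List.length_append, ih fun x hx => h x (by simp [hx]),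
      h cb (by simp)]
    simp [marker]
    ring

lemma getElem?_hag (t E : ℕ) (bl : List (List Bool)) (h : ∀ cb ∈ bl, cb.length = E)
    {i s : ℕ} (hi : i < bl.length) (hs₁ : E ≤ s) (hs₂ : s < E + 2 * t) :
    (hag t bl)[(E + 2 * t) * i + s]? = some (decide (E + t ≤ s)) := by
  induction bl generalizing i with
  | nil => simp at hi
  | cons cb bl ih =>
    have hcb : cb.length = E := h cb (by simp)
    rw [hag_cons]
    cases i with
    | zero =>
      rw [Nat.mul_zero, Nat.zero_add, List.getElem?_append_left (by simp [hcb, marker]; omega),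
        List.getElem?_append_right (by omega), marker, hcb, List.getElem?_append]
      simp only [List.length_replicate, List.getElem?_replicate]
      split_ifs <;> first | omega | (simp; omega)
    | succ i =>
      rw [List.getElem?_append_right (by simp [hcb, marker]; ring_nf; omega)]
      have e : (E + 2 * t) * (i + 1) + s - (cb ++ marker t).length = (E + 2 * t) * i + s := by
        simp [hcb, marker]; ring_nf; omega
      rw [e, ih (fun x hx => h x (by simp [hx])) (by simpa using hi)]

end Encoding

section Patterns

variable {τd τi : ℕ} {l : ℤ}

lemma bounds_of_length_pat (h : (pat τd τi l).length = τd + τi) :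
    -(τd : ℤ) ≤ l ∧ l ≤ τi := by
  simp [pat] at h
  omega

lemma count_false_pat : (pat τd τi l).count false = ((τd : ℤ) + l).toNat := by
  simp [pat, List.count_append, List.count_replicate]

lemma getElem?_pat (j : ℕ) :
    (pat τd τi l)[j]? = if j < ((τd : ℤ) + l).toNat then some false
      else if j < ((τd : ℤ) + l).toNat + ((τi : ℤ) - l).toNat then some true else none := by
  rw [pat, List.getElem?_append]
  simp only [List.length_replicate, List.getElem?_replicate]
  split_ifs <;> first | rfl | omega

end Patterns

lemma stepUV_cases (E t τd τi : ℕ) (y : List Bool) (b : ℕ) (s : ℕ × ℕ) :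
    (window E t τd τi y b = pat τd τi (s.2 - s.1) ∧ stepUV E t τd τi y b s = s) ∨
    (∃ n : ℕ, 0 < n ∧ window E t τd τi y b = pat τd τi (s.2 - s.1 - n) ∧
      stepUV E t τd τi y b s = (s.1 + n, s.2)) ∨
    ((∀ n ≤ τd + τi, window E t τd τi y b ≠ pat τd τi (s.2 - s.1 - n)) ∧
      stepUV E t τd τi y b s = (s.1, s.2 + 1)) := by
  by_cases h : window E t τd τi y b = pat τd τi (s.2 - s.1)
  · exact Or.inl ⟨h, by simp [stepUV, h]⟩
  right
  cases hf : (List.range (τd + τi + 1)).find?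
      (fun n : ℕ => n != 0 && (window E t τd τi y b == pat τd τi ((s.2 : ℤ) - s.1 - n))) with
  | some n =>
    have hn := List.find?_some hf
    simp only [Bool.and_eq_true, bne_iff_ne, ne_eq, beq_iff_eq] at hn
    exact Or.inl ⟨n, Nat.pos_of_ne_zero hn.1, hn.2, by simp [stepUV, h, hf]⟩
  | none =>
    refine Or.inr ⟨fun n hn hw => ?_, by simp [stepUV, h, hf]⟩
    rcases Nat.eq_zero_or_pos n with rfl | hpos
    · exact h (by simpa using hw)
    · have := List.find?_eq_none.1 hf n (List.mem_range.2 (by omega))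
      simp [hw, hpos.ne'] at this

/-- `y` arises from the codeword `c` by deleting the 1-indexed positions `J` of `c` and inserting
the 1-indexed positions `K` of `y`; `c` is `N` data blocks of length `E`, each followed by the
marker `0^t 1^t`. -/
structure Setup where
  N : ℕ
  E : ℕ
  t : ℕ
  td : ℕ
  ti : ℕ
  τd : ℕ
  τi : ℕ
  c : List Bool
  y : List Bool
  J : Finset ℕ
  K : Finset ℕ
  card_J : J.card = td
  card_K : K.card = ti
  del_eq : del y K = del c J
  length_c : c.length = N * (E + 2 * t)
  getElem?_c : ∀ i < N, ∀ s, E ≤ s → s < E + 2 * t →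
    getElem? c ((E + 2 * t) * i + s) = some (decide (E + t ≤ s))
  td_le_τd : td ≤ τd
  ti_le_τi : ti ≤ τi
  τd_add_ti_le : τd + ti ≤ t
  τi_add_td_le : τi + td ≤ t

namespace Setup

variable (S : Setup)

lemma countMem_J_le (q : ℕ) : countMem S.J q ≤ S.td := S.card_J ▸ countMem_le_card S.J q

lemma countMem_K_le (q : ℕ) : countMem S.K q ≤ S.ti := S.card_K ▸ countMem_le_card S.K q

lemma countNotMem_K_length : countNotMem S.K S.y.length = countNotMem S.J S.c.length := by
  rw [← length_del, ← length_del, S.del_eq]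

/-- The position of `y` aligned with position `P` of `c`. -/
noncomputable def alignedLen (P : ℕ) : ℕ :=
  sInf {m | countNotMem S.K m = countNotMem S.J P}

lemma exists_countNotMem_K_eq {P : ℕ} (hP : P ≤ S.c.length) :
    ∃ m ≤ S.y.length, countNotMem S.K m = countNotMem S.J P := by
  obtain h0 | hpos := Nat.eq_zero_or_pos (countNotMem S.J P)
  · exact ⟨0, Nat.zero_le _, by rw [h0]; rfl⟩
  have hlt : countNotMem S.J P - 1 < countNotMem S.K S.y.length := by
    have := countNotMem_mono S.J hP
    rw [countNotMem_K_length]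
    omega
  obtain ⟨q, hq, hqK, hqP⟩ := exists_countNotMem_eq S.K hlt
  refine ⟨q + 1, hq, ?_⟩
  rw [countNotMem_succ, if_neg hqK, hqP]
  omega

lemma countNotMem_alignedLen {P : ℕ} (hP : P ≤ S.c.length) :
    countNotMem S.K (S.alignedLen P) = countNotMem S.J P :=
  Nat.sInf_mem (s := {m | countNotMem S.K m = countNotMem S.J P})
    ((S.exists_countNotMem_K_eq hP).imp fun _ h => h.2)

lemma alignedLen_le_length {P : ℕ} (hP : P ≤ S.c.length) : S.alignedLen P ≤ S.y.length := by
  obtain ⟨m, hm, hmP⟩ := S.exists_countNotMem_K_eq hP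
  have : S.alignedLen P ≤ m := Nat.sInf_le hmP
  omega

lemma alignedLen_eq {P : ℕ} (hP : P ≤ S.c.length) :
    S.alignedLen P + countMem S.J P = P + countMem S.K (S.alignedLen P) := by
  have h1 := S.countNotMem_alignedLen hP
  have h2 := countNotMem_add_countMem S.K (S.alignedLen P)
  have h3 := countNotMem_add_countMem S.J P
  omega

noncomputable def trueOffset (P : ℕ) : ℤ := (S.alignedLen P : ℤ) - P

lemma trueOffset_eq {P : ℕ} (hP : P ≤ S.c.length) :
    S.trueOffset P = countMem S.K (S.alignedLen P) - countMem S.J P := by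
  have := S.alignedLen_eq hP
  unfold trueOffset
  omega

lemma exists_getElem?_c_eq {j : ℕ} (hj : j < S.y.length) (hjK : j + 1 ∉ S.K) :
    ∃ p, p + 1 ∉ S.J ∧ countNotMem S.J (p + 1) = countNotMem S.K (j + 1) ∧
      S.y[j]? = S.c[p]? := by
  have hK := countNotMem_succ S.K j
  rw [if_neg hjK] at hK
  have hlt : countNotMem S.K j < countNotMem S.J S.c.length := by
    have := countNotMem_mono S.K (show j + 1 ≤ S.y.length by omega)
    rw [← countNotMem_K_length]
    omega
  obtain ⟨p, hp, hpJ, hpj⟩ := exists_countNotMem_eq S.J hlt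
  refine ⟨p, hpJ, by rw [countNotMem_succ, if_neg hpJ, hpj, hK], ?_⟩
  rw [← getElem?_del S.K S.y hj hjK, S.del_eq, ← hpj, getElem?_del S.J S.c hp hpJ]

def blockEnd (b : ℕ) : ℕ := (S.E + 2 * S.t) * b

def markerMid (b : ℕ) : ℕ := S.blockEnd (b - 1) + S.E + S.t

lemma blockEnd_eq {b : ℕ} (hb : 1 ≤ b) : S.blockEnd b = S.blockEnd (b - 1) + S.E + 2 * S.t := by
  obtain ⟨k, rfl⟩ : ∃ k, b = k + 1 := ⟨b - 1, by omega⟩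
  simp only [blockEnd, Nat.add_sub_cancel]
  ring

lemma blockEnd_le_length {b : ℕ} (hb : b ≤ S.N) : S.blockEnd b ≤ S.c.length := by
  rw [blockEnd, S.length_c, Nat.mul_comm]
  exact Nat.mul_le_mul_right _ hb

lemma getElem?_c_marker {b : ℕ} (hb₁ : 1 ≤ b) (hbN : b ≤ S.N) {p : ℕ}
    (hp₁ : S.blockEnd (b - 1) + S.E ≤ p) (hp₂ : p < S.blockEnd b) :
    S.c[p]? = some (decide (S.markerMid b ≤ p)) := by
  have h := S.getElem?_c (b - 1) (by omega) (p - S.blockEnd (b - 1)) (by omega)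
    (by rw [S.blockEnd_eq hb₁] at hp₂; omega)
  rw [← blockEnd, Nat.add_sub_cancel' (by omega)] at h
  rw [h, markerMid]
  congr 1
  exact decide_eq_decide.2 (by omega)

lemma alignedLen_le {P : ℕ} (hP : P ≤ S.c.length) : S.alignedLen P ≤ P + S.ti := by
  have := S.alignedLen_eq hP
  have := S.countMem_K_le (S.alignedLen P)
  omega

lemma le_alignedLen {P : ℕ} (hP : P ≤ S.c.length) : P ≤ S.alignedLen P + S.td := by
  have := S.alignedLen_eq hP
  have := S.countMem_J_le P
  omega

lemma getElem?_y_near_marker {b : ℕ} (hb₁ : 1 ≤ b) (hbN : b ≤ S.N) {j : ℕ}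
    (hj₁ : S.markerMid b ≤ j + S.τd) (hj₂ : j < S.markerMid b + S.τi) (hjK : j + 1 ∉ S.K) :
    S.y[j]? = some (decide (S.alignedLen (S.markerMid b) ≤ j)) := by
  have hend := S.blockEnd_eq hb₁
  have hmid : S.markerMid b ≤ S.c.length := by
    have := S.blockEnd_le_length hbN; unfold markerMid; omega
  have hj : j < S.y.length := by
    have := S.alignedLen_le_length (S.blockEnd_le_length hbN)
    have := S.le_alignedLen (S.blockEnd_le_length hbN)
    have := S.τi_add_td_le
    unfold markerMid at hj₂
    omega
  obtain ⟨p, hpJ, hpj, hyc⟩ := S.exists_getElem?_c_eq hj hjK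
  have hp : S.blockEnd (b - 1) + S.E ≤ p ∧ p < S.blockEnd b := by
    have := countNotMem_add_countMem S.J (p + 1)
    have := countNotMem_add_countMem S.K (j + 1)
    have := S.countMem_J_le (p + 1)
    have := S.countMem_K_le (j + 1)
    have := S.τd_add_ti_le
    have := S.τi_add_td_le
    unfold markerMid at hj₁ hj₂
    omega
  have hiff : S.alignedLen (S.markerMid b) ≤ j ↔ S.markerMid b ≤ p := by
    rw [← not_lt, ← not_lt, Nat.lt_iff_add_one_le, Nat.lt_iff_add_one_le,
      le_iff_countNotMem_le S.K (by omega) hjK, le_iff_countNotMem_le S.J (by omega) hpJ,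
      S.countNotMem_alignedLen hmid, hpj]
  rw [hyc, S.getElem?_c_marker hb₁ hbN hp.1 hp.2, decide_eq_decide.2 hiff]

lemma markerMid_add_τi_le_length {b : ℕ} (hb₁ : 1 ≤ b) (hbN : b ≤ S.N) :
    S.markerMid b + S.τi ≤ S.y.length := by
  have := S.alignedLen_le_length (S.blockEnd_le_length hbN)
  have := S.le_alignedLen (S.blockEnd_le_length hbN)
  have := S.blockEnd_eq hb₁
  have := S.τi_add_td_le
  unfold markerMid
  omega

lemma τd_le_markerMid (b : ℕ) : S.τd ≤ S.markerMid b := by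
  have := S.τd_add_ti_le
  unfold markerMid
  omega

lemma markerMid_le_length {b : ℕ} (hb₁ : 1 ≤ b) (hbN : b ≤ S.N) : S.markerMid b ≤ S.c.length := by
  have := S.blockEnd_le_length hbN
  have := S.blockEnd_eq hb₁
  unfold markerMid
  omega

lemma markerMid_le_alignedLen_add {b : ℕ} (hb₁ : 1 ≤ b) (hbN : b ≤ S.N) :
    S.markerMid b ≤ S.alignedLen (S.markerMid b) + S.τd :=
  (S.le_alignedLen (S.markerMid_le_length hb₁ hbN)).trans (by have := S.td_le_τd; omega)

lemma alignedLen_markerMid_le {b : ℕ} (hb₁ : 1 ≤ b) (hbN : b ≤ S.N) :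
    S.alignedLen (S.markerMid b) ≤ S.markerMid b + S.τi :=
  (S.alignedLen_le (S.markerMid_le_length hb₁ hbN)).trans (by have := S.ti_le_τi; omega)

lemma window_eq (b : ℕ) :
    window S.E S.t S.τd S.τi S.y b = (S.y.drop (S.markerMid b - S.τd)).take (S.τd + S.τi) :=
  rfl

lemma length_window {b : ℕ} (hb₁ : 1 ≤ b) (hbN : b ≤ S.N) :
    (window S.E S.t S.τd S.τi S.y b).length = S.τd + S.τi := by
  have := S.markerMid_add_τi_le_length hb₁ hbN
  have := S.τd_le_markerMid b
  rw [window_eq, List.length_take, List.length_drop]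
  omega

lemma window_eq_pat_of_countMem_eq {b : ℕ} (hb₁ : 1 ≤ b) (hbN : b ≤ S.N)
    (hK : countMem S.K (S.markerMid b + S.τi) = countMem S.K (S.markerMid b - S.τd)) :
    window S.E S.t S.τd S.τi S.y b = pat S.τd S.τi (S.trueOffset (S.markerMid b)) := by
  have h₁ := S.markerMid_le_alignedLen_add hb₁ hbN
  have h₂ := S.alignedLen_markerMid_le hb₁ hbN
  have h₃ := S.τd_le_markerMid b
  apply List.ext_getElem?
  intro n
  rw [window_eq, getElem?_take_drop, getElem?_pat, trueOffset]
  by_cases hn : n < S.τd + S.τi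
  · have hnK : S.markerMid b - S.τd + n + 1 ∉ S.K :=
      not_mem_of_countMem_eq S.K hK (by omega) (by omega)
    rw [if_pos hn, S.getElem?_y_near_marker hb₁ hbN (by omega) (by omega) hnK]
    split_ifs
    · simp only [Option.some.injEq, decide_eq_false_iff_not]; omega
    · simp only [Option.some.injEq, decide_eq_true_eq]; omega
    · omega
  · rw [if_neg hn, if_neg (by omega), if_neg (by omega)]

lemma countP_false_not_mem_window {b : ℕ} (hb₁ : 1 ≤ b) (hbN : b ≤ S.N) :
    (List.range' (S.markerMid b - S.τd) (S.τd + S.τi)).countP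
        (fun j => (S.y.getD j false == false) && !decide (j + 1 ∈ S.K)) =
      countNotMem S.K (S.alignedLen (S.markerMid b)) - countNotMem S.K (S.markerMid b - S.τd) := by
  have hγ₁ := S.markerMid_le_alignedLen_add hb₁ hbN
  have hγ₂ := S.alignedLen_markerMid_le hb₁ hbN
  have hγ₃ := S.τd_le_markerMid b
  have hgetD : ∀ j, S.markerMid b ≤ j + S.τd → j < S.markerMid b + S.τi → j + 1 ∉ S.K →
      S.y.getD j false = decide (S.alignedLen (S.markerMid b) ≤ j) := by
    intro j hj₁ hj₂ hjK
    rw [List.getD_eq_getElem?_getD, S.getElem?_y_near_marker hb₁ hbN hj₁ hj₂ hjK]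
    rfl
  set s := S.markerMid b - S.τd
  set m := S.alignedLen (S.markerMid b)
  have hsplit : List.range' s (S.τd + S.τi) =
      List.range' s (m - s) ++ List.range' (s + (m - s)) (S.τd + S.τi - (m - s)) := by
    rw [List.range'_append_1, Nat.add_sub_cancel' (by omega : m - s ≤ S.τd + S.τi)]
  have hbefore : (List.range' s (m - s)).countP
      (fun j => (S.y.getD j false == false) && !decide (j + 1 ∈ S.K)) =
      (List.range' s (m - s)).countP (fun j => decide (j + 1 ∉ S.K)) := by
    refine List.countP_congr fun j hj => ?_
    rw [List.mem_range'_1] at hj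
    by_cases hjK : j + 1 ∈ S.K
    · simp [hjK]
    · rw [hgetD j (by omega) (by omega) hjK]
      simp [hjK]
      omega
  have hafter : (List.range' (s + (m - s)) (S.τd + S.τi - (m - s))).countP
      (fun j => (S.y.getD j false == false) && !decide (j + 1 ∈ S.K)) = 0 := by
    refine List.countP_eq_zero.2 fun j hj => ?_
    rw [List.mem_range'_1] at hj
    by_cases hjK : j + 1 ∈ S.K
    · simp [hjK]
    · rw [hgetD j (by omega) (by omega) hjK]
      simp [hjK]
      omega
  have hcount := countNotMem_add S.K s (m - s)
  rw [Nat.add_sub_cancel' (by omega)] at hcount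
  rw [hsplit, List.countP_append, hbefore, hafter, hcount]
  omega

/-- `z` is the number of inserted zeros in the window. -/
lemma exists_of_window_eq_pat {b : ℕ} (hb₁ : 1 ≤ b) (hbN : b ≤ S.N) {l : ℤ}
    (h : window S.E S.t S.τd S.τi S.y b = pat S.τd S.τi l) :
    l ≤ S.τi ∧ ∃ z : ℕ,
      z + countMem S.K (S.markerMid b - S.τd) ≤ countMem S.K (S.markerMid b + S.τi) ∧
      l = S.trueOffset (S.markerMid b) + z -
        (countMem S.K (S.alignedLen (S.markerMid b)) - countMem S.K (S.markerMid b - S.τd)) := by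
  have hl := bounds_of_length_pat (h ▸ S.length_window hb₁ hbN)
  have hγ₁ := S.markerMid_le_alignedLen_add hb₁ hbN
  have hγ₂ := S.τd_le_markerMid b
  have hzeros : ((S.τd : ℤ) + l).toNat =
      (List.range' (S.markerMid b - S.τd) (S.τd + S.τi)).countP
        (fun j => S.y.getD j false == false) := by
    rw [← count_false_pat, ← h, window_eq]
    exact count_take_drop _ _ _ _ (by have := S.markerMid_add_τi_le_length hb₁ hbN; omega)
  rw [List.countP_eq_countP_filter_add _ _ (fun j => decide (j + 1 ∈ S.K)),
    List.countP_filter, List.countP_filter, S.countP_false_not_mem_window hb₁ hbN] at hzeros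
  set z := (List.range' (S.markerMid b - S.τd) (S.τd + S.τi)).countP
    (fun j => (S.y.getD j false == false) && decide (j + 1 ∈ S.K))
  refine ⟨hl.2, z, ?_, ?_⟩
  · rw [show S.markerMid b + S.τi = S.markerMid b - S.τd + (S.τd + S.τi) by omega, countMem_add,
      Nat.add_comm]
    exact Nat.add_le_add_left (List.countP_mono_left fun j _ hj => by simp_all) _
  · have := countNotMem_mono S.K (show S.markerMid b - S.τd ≤ S.alignedLen (S.markerMid b) by omega)
    have := countNotMem_add_countMem S.K (S.alignedLen (S.markerMid b))
    have := countNotMem_add_countMem S.K (S.markerMid b - S.τd)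
    unfold trueOffset
    omega

lemma alignedLen_blockEnd_add_le {b : ℕ} (hb₁ : 1 ≤ b) (hbN : b ≤ S.N) :
    S.alignedLen (S.blockEnd (b - 1)) + S.E + S.τd ≤ S.markerMid b := by
  have := S.alignedLen_le ((S.blockEnd_le_length (b := b - 1) (by omega)))
  have := S.τd_add_ti_le
  unfold markerMid
  omega

lemma take_drop_y_eq_of_countMem_eq {b : ℕ} (hb₁ : 1 ≤ b) (hbN : b ≤ S.N)
    (hJ : countMem S.J (S.blockEnd (b - 1) + S.E) = countMem S.J (S.blockEnd (b - 1)))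
    (hK : countMem S.K (S.alignedLen (S.blockEnd (b - 1)) + S.E) =
      countMem S.K (S.alignedLen (S.blockEnd (b - 1)))) :
    (S.y.drop (S.alignedLen (S.blockEnd (b - 1)))).take S.E =
      (S.c.drop (S.blockEnd (b - 1))).take S.E := by
  have hP : S.blockEnd (b - 1) ≤ S.c.length := S.blockEnd_le_length (by omega)
  have hmE : S.alignedLen (S.blockEnd (b - 1)) + S.E ≤ S.y.length := by
    have := S.alignedLen_blockEnd_add_le hb₁ hbN
    have := S.markerMid_add_τi_le_length hb₁ hbN
    omega
  have hm := S.alignedLen_eq hP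
  set P := S.blockEnd (b - 1)
  set m := S.alignedLen P
  apply List.ext_getElem?
  intro n
  rw [getElem?_take_drop, getElem?_take_drop]
  split_ifs with hn
  · have hnK : m + n + 1 ∉ S.K := not_mem_of_countMem_eq S.K hK (by omega) (by omega)
    have hnJ : P + n + 1 ∉ S.J := not_mem_of_countMem_eq S.J hJ (by omega) (by omega)
    obtain ⟨p, hpJ, hpj, hyc⟩ := S.exists_getElem?_c_eq (j := m + n) (by omega) hnK
    suffices p = P + n by rw [hyc, this]
    have hK' : countMem S.K (m + n + 1) = countMem S.K m :=
      le_antisymm (hK ▸ countMem_mono S.K (by omega)) (countMem_mono S.K (by omega))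
    have hJ' : countMem S.J (P + n + 1) = countMem S.J P :=
      le_antisymm (hJ ▸ countMem_mono S.J (by omega)) (countMem_mono S.J (by omega))
    have := countNotMem_add_countMem S.K (m + n + 1)
    have := countNotMem_add_countMem S.J (P + n + 1)
    have := eq_of_countNotMem_eq S.J (a := p + 1) (b := P + n + 1) (by omega) hpJ (by omega) hnJ
      (by omega)
    omega
  · rfl

lemma trueOffset_block_eq {b : ℕ} (hb₁ : 1 ≤ b) (hbN : b ≤ S.N) :
    S.trueOffset (S.blockEnd (b - 1)) =
        countMem S.K (S.alignedLen (S.blockEnd (b - 1))) - countMem S.J (S.blockEnd (b - 1)) ∧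
      S.trueOffset (S.markerMid b) =
        countMem S.K (S.alignedLen (S.markerMid b)) - countMem S.J (S.markerMid b) ∧
      S.trueOffset (S.blockEnd b) =
        countMem S.K (S.alignedLen (S.blockEnd b)) - countMem S.J (S.blockEnd b) :=
  ⟨S.trueOffset_eq (S.blockEnd_le_length (by omega)),
    S.trueOffset_eq (S.markerMid_le_length hb₁ hbN), S.trueOffset_eq (S.blockEnd_le_length hbN)⟩

lemma countMem_K_mono_block {b : ℕ} (hb₁ : 1 ≤ b) (hbN : b ≤ S.N) :
    countMem S.K (S.alignedLen (S.blockEnd (b - 1))) ≤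
        countMem S.K (S.alignedLen (S.blockEnd (b - 1)) + S.E) ∧
      countMem S.K (S.alignedLen (S.blockEnd (b - 1)) + S.E) ≤
        countMem S.K (S.markerMid b - S.τd) ∧
      countMem S.K (S.markerMid b - S.τd) ≤ countMem S.K (S.alignedLen (S.markerMid b)) ∧
      countMem S.K (S.alignedLen (S.markerMid b)) ≤ countMem S.K (S.markerMid b + S.τi) ∧
      countMem S.K (S.markerMid b + S.τi) ≤ countMem S.K (S.alignedLen (S.blockEnd b)) := by
  have := S.alignedLen_blockEnd_add_le hb₁ hbN
  have := S.markerMid_le_alignedLen_add hb₁ hbN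
  have := S.alignedLen_markerMid_le hb₁ hbN
  have := S.le_alignedLen (S.blockEnd_le_length hbN)
  have := S.blockEnd_eq hb₁
  have := S.τi_add_td_le
  unfold markerMid at *
  refine ⟨countMem_mono _ ?_, countMem_mono _ ?_, countMem_mono _ ?_, countMem_mono _ ?_,
    countMem_mono _ ?_⟩ <;> omega

lemma countMem_J_mono_block {b : ℕ} (hb₁ : 1 ≤ b) :
    countMem S.J (S.blockEnd (b - 1)) ≤ countMem S.J (S.blockEnd (b - 1) + S.E) ∧
      countMem S.J (S.blockEnd (b - 1) + S.E) ≤ countMem S.J (S.markerMid b) ∧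
      countMem S.J (S.markerMid b) ≤ countMem S.J (S.blockEnd b) := by
  have := S.blockEnd_eq hb₁
  unfold markerMid
  exact ⟨countMem_mono _ (by omega), countMem_mono _ (by omega), countMem_mono _ (by omega)⟩

def offset (b : ℕ) : ℤ :=
  ((uv S.E S.t S.τd S.τi S.y b).2 : ℤ) - (uv S.E S.t S.τd S.τi S.y b).1

def cost (b : ℕ) : ℕ :=
  if uv S.E S.t S.τd S.τi S.y b ≠ uv S.E S.t S.τd S.τi S.y (b - 1) then 1
  else if extractBlock S.E S.t S.τd S.τi S.y b ≠ cBlock S.E S.t S.c b then 2 else 0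

noncomputable def offsetError (b : ℕ) : ℕ := (S.trueOffset (S.blockEnd b) - S.offset b).natAbs

noncomputable def edits (b : ℕ) : ℕ :=
  countMem S.J (S.blockEnd b) + countMem S.K (S.alignedLen (S.blockEnd b))

/-- Keeps the true offset within the search range `l - n`, `n ≤ τd + τi`, of the decoder. -/
def OffsetBounded (b : ℕ) : Prop :=
  S.offset b - S.trueOffset (S.blockEnd b) + S.td ≤ S.τd + S.τi + countMem S.J (S.blockEnd b)

lemma extractBlock_eq_cBlock {b : ℕ} (hb₁ : 1 ≤ b) (hbN : b ≤ S.N)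
    (hoff : S.offset b = S.trueOffset (S.blockEnd (b - 1)))
    (hJ : countMem S.J (S.blockEnd (b - 1) + S.E) = countMem S.J (S.blockEnd (b - 1)))
    (hK : countMem S.K (S.alignedLen (S.blockEnd (b - 1)) + S.E) =
      countMem S.K (S.alignedLen (S.blockEnd (b - 1)))) :
    extractBlock S.E S.t S.τd S.τi S.y b = cBlock S.E S.t S.c b := by
  have hstart : (((S.blockEnd (b - 1) : ℕ) : ℤ) + S.offset b).toNat =
      S.alignedLen (S.blockEnd (b - 1)) := by
    rw [hoff, trueOffset]
    omega
  change (S.y.drop (((S.blockEnd (b - 1) : ℕ) : ℤ) + S.offset b).toNat).take S.E =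
    (S.c.drop (S.blockEnd (b - 1))).take S.E
  rw [hstart, S.take_drop_y_eq_of_countMem_eq hb₁ hbN hJ hK]

lemma step_of_window_eq_pat {b : ℕ} (hb₁ : 1 ≤ b) (hbN : b ≤ S.N)
    (hw : window S.E S.t S.τd S.τi S.y b = pat S.τd S.τi (S.offset (b - 1)))
    (huv : uv S.E S.t S.τd S.τi S.y b = uv S.E S.t S.τd S.τi S.y (b - 1)) :
    S.cost b + S.offsetError b + S.edits (b - 1) ≤ S.offsetError (b - 1) + S.edits b ∧
      S.OffsetBounded b := by
  have hoff : S.offset b = S.offset (b - 1) := by simp only [offset, huv]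
  obtain ⟨hlτ, z, hz, hl⟩ := S.exists_of_window_eq_pat hb₁ hbN hw
  obtain ⟨hT₀, hTγ, hT₁⟩ := S.trueOffset_block_eq hb₁ hbN
  have hK := S.countMem_K_mono_block hb₁ hbN
  have hJ := S.countMem_J_mono_block hb₁
  have := S.td_le_τd
  have hbdd : S.OffsetBounded b := by unfold OffsetBounded; omega
  unfold cost offsetError edits
  rw [if_neg (not_not.2 huv)]
  split_ifs with hext
  · have hedit : ¬ (S.offset b = S.trueOffset (S.blockEnd (b - 1)) ∧
        countMem S.J (S.blockEnd (b - 1) + S.E) = countMem S.J (S.blockEnd (b - 1)) ∧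
        countMem S.K (S.alignedLen (S.blockEnd (b - 1)) + S.E) =
          countMem S.K (S.alignedLen (S.blockEnd (b - 1)))) :=
      fun ⟨h₁, h₂, h₃⟩ => hext (S.extractBlock_eq_cBlock hb₁ hbN h₁ h₂ h₃)
    exact ⟨by omega, hbdd⟩
  · exact ⟨by omega, hbdd⟩

lemma step_of_window_eq_pat_sub {b n : ℕ} (hb₁ : 1 ≤ b) (hbN : b ≤ S.N) (hn : 0 < n)
    (hw : window S.E S.t S.τd S.τi S.y b = pat S.τd S.τi (S.offset (b - 1) - n))
    (hoff : S.offset b = S.offset (b - 1) - n)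
    (huv : uv S.E S.t S.τd S.τi S.y b ≠ uv S.E S.t S.τd S.τi S.y (b - 1)) :
    S.cost b + S.offsetError b + S.edits (b - 1) ≤ S.offsetError (b - 1) + S.edits b ∧
      S.OffsetBounded b := by
  obtain ⟨hlτ, z, hz, hl⟩ := S.exists_of_window_eq_pat hb₁ hbN hw
  obtain ⟨hT₀, hTγ, hT₁⟩ := S.trueOffset_block_eq hb₁ hbN
  have hK := S.countMem_K_mono_block hb₁ hbN
  have hJ := S.countMem_J_mono_block hb₁
  have := S.td_le_τd
  unfold cost offsetError edits OffsetBounded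
  rw [if_pos huv]
  exact ⟨by omega, by omega⟩

lemma step_of_forall_window_ne_pat {b : ℕ} (hb₁ : 1 ≤ b) (hbN : b ≤ S.N)
    (hw : ∀ n ≤ S.τd + S.τi, window S.E S.t S.τd S.τi S.y b ≠ pat S.τd S.τi (S.offset (b - 1) - n))
    (hoff : S.offset b = S.offset (b - 1) + 1)
    (huv : uv S.E S.t S.τd S.τi S.y b ≠ uv S.E S.t S.τd S.τi S.y (b - 1))
    (hbdd : S.OffsetBounded (b - 1)) :
    S.cost b + S.offsetError b + S.edits (b - 1) ≤ S.offsetError (b - 1) + S.edits b ∧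
      S.OffsetBounded b := by
  obtain ⟨hT₀, hTγ, hT₁⟩ := S.trueOffset_block_eq hb₁ hbN
  have hK := S.countMem_K_mono_block hb₁ hbN
  have hJ := S.countMem_J_mono_block hb₁
  have := S.td_le_τd
  have hjump : countMem S.K (S.alignedLen (S.blockEnd (b - 1))) <
      countMem S.K (S.alignedLen (S.blockEnd b)) ∨
      S.offset (b - 1) < S.trueOffset (S.blockEnd (b - 1)) := by
    -- otherwise the window is free of insertions and the algorithm would have found its offset
    by_contra! h
    have := S.countMem_J_le (S.markerMid b)
    have hpure := S.window_eq_pat_of_countMem_eq hb₁ hbN (by omega)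
    unfold OffsetBounded at hbdd
    refine hw (S.offset (b - 1) - S.trueOffset (S.markerMid b)).toNat (by omega) ?_
    rw [hpure]
    congr 1
    omega
  unfold cost offsetError edits OffsetBounded at *
  rw [if_pos huv]
  exact ⟨by omega, by omega⟩

lemma step {b : ℕ} (hb₁ : 1 ≤ b) (hbN : b ≤ S.N) (hbdd : S.OffsetBounded (b - 1)) :
    S.cost b + S.offsetError b + S.edits (b - 1) ≤ S.offsetError (b - 1) + S.edits b ∧
      S.OffsetBounded b := by
  have huv : uv S.E S.t S.τd S.τi S.y b =
      stepUV S.E S.t S.τd S.τi S.y b (uv S.E S.t S.τd S.τi S.y (b - 1)) := by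
    obtain ⟨k, rfl⟩ : ∃ k, b = k + 1 := ⟨b - 1, by omega⟩
    rfl
  rcases stepUV_cases S.E S.t S.τd S.τi S.y b (uv S.E S.t S.τd S.τi S.y (b - 1)) with
    ⟨hw, hs⟩ | ⟨n, hn, hw, hs⟩ | ⟨hw, hs⟩ <;> rw [← huv] at hs
  · exact S.step_of_window_eq_pat hb₁ hbN hw hs
  · refine S.step_of_window_eq_pat_sub hb₁ hbN hn hw ?_ ?_
    · simp only [offset, hs]; push_cast; ring
    · rw [hs]; simp [Prod.ext_iff]; omega
  · refine S.step_of_forall_window_ne_pat hb₁ hbN hw ?_ ?_ hbdd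
    · simp only [offset, hs]; push_cast; ring
    · rw [hs]; simp [Prod.ext_iff]

lemma sum_cost_add_offsetError_le {b : ℕ} (hbN : b ≤ S.N) :
    ∑ j ∈ Finset.Icc 1 b, S.cost j + S.offsetError b ≤ S.edits b ∧ S.OffsetBounded b := by
  induction b with
  | zero =>
    have h0 : S.alignedLen 0 = 0 := Nat.sInf_eq_zero.2 (Or.inl rfl)
    have := S.td_le_τd
    simp [offsetError, OffsetBounded, offset, trueOffset, blockEnd, h0, uv]
    omega
  | succ b ih =>
    obtain ⟨ih₁, ih₂⟩ := ih (by omega)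
    obtain ⟨h₁, h₂⟩ := S.step (b := b + 1) (by omega) hbN ih₂
    rw [Finset.sum_Icc_succ_top (by omega)]
    exact ⟨by simp only [Nat.add_sub_cancel] at h₁; omega, h₂⟩

lemma sum_cost_le : ∑ j ∈ Finset.Icc 1 S.N, S.cost j ≤ S.t := by
  have := (S.sum_cost_add_offsetError_le le_rfl).1
  have := S.countMem_J_le (S.blockEnd S.N)
  have := S.countMem_K_le (S.alignedLen (S.blockEnd S.N))
  have := S.td_le_τd
  have := S.τd_add_ti_le
  unfold edits at *
  omega

end Setup

end Hagiwara

theorem stmt15_general (N E t td ti : ℕ) (r : ℤ) (hr : r = (ti : ℤ) - (td : ℤ))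
    (htdi : td + ti ≤ t)
    (τd τi : ℕ)
    (hτd : (τd : ℤ) = ((t : ℤ) - r) / 2) (hτi : (τi : ℤ) = ((t : ℤ) + r) / 2)
    (blocks : List (List Bool)) (hNb : blocks.length = N)
    (hEb : ∀ cb ∈ blocks, cb.length = E)
    (c y : List Bool) (hc : c = hag t blocks)
    (J K : Finset ℕ) (hJc : J.card = td) (hKc : K.card = ti)
    (hy : y.length = c.length - td + ti ∧ del y K = del c J)
    -- the blocks marked as erased by Algorithm 1
    (Pe : Finset ℕ)
    (hPe : Pe = (Finset.Icc 1 N).filter (fun b =>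
      uv E t τd τi y b ≠ uv E t τd τi y (b - 1)))
    -- the unmarked blocks whose extracted block differs from the original
    (Ps : Finset ℕ)
    (hPs : Ps = (Finset.Icc 1 N).filter (fun b =>
      uv E t τd τi y b = uv E t τd τi y (b - 1) ∧
      extractBlock E t τd τi y b ≠ cBlock E t c b)) :
    Pe.card + 2 * Ps.card ≤ t ∧
    ∀ b ∈ Finset.Icc 1 N, b ∉ Pe ∪ Ps →
      extractBlock E t τd τi y b = cBlock E t c b := by
  let S : Hagiwara.Setup :=
    { N, E, t, td, ti, τd, τi, c, y, J, K
      card_J := hJc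
      card_K := hKc
      del_eq := hy.2
      length_c := by rw [hc, Hagiwara.length_hag t E blocks hEb, hNb]
      getElem?_c := fun i hi s h₁ h₂ => hc ▸ Hagiwara.getElem?_hag t E blocks hEb (hNb ▸ hi) h₁ h₂
      td_le_τd := by omega
      ti_le_τi := by omega
      τd_add_ti_le := by omega
      τi_add_td_le := by omega }
  have hcost : Pe.card + 2 * Ps.card = ∑ b ∈ Finset.Icc 1 N, S.cost b := by
    rw [hPe, hPs, Finset.card_filter, Finset.card_filter, Finset.mul_sum, ← Finset.sum_add_distrib]
    refine Finset.sum_congr rfl fun b _ => ?_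
    simp only [Hagiwara.Setup.cost, S]
    split_ifs <;> simp_all
  refine ⟨hcost ▸ S.sum_cost_le, fun b hb hbP => ?_⟩
  by_contra hne
  simp only [hPe, hPs, Finset.mem_union, Finset.mem_filter] at hbP
  tauto

theorem stmt15 (N E t td ti : ℕ) (r : ℤ) (hr : r = (ti : ℤ) - (td : ℤ))
    (htd : 1 ≤ td) (hti : 1 ≤ ti) (htdi : td + ti ≤ t)
    (τd τi : ℕ)
    (hτd : (τd : ℤ) = ((t : ℤ) - r) / 2) (hτi : (τi : ℤ) = ((t : ℤ) + r) / 2)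
    (blocks : List (List Bool)) (hNb : blocks.length = N)
    (hEb : ∀ cb ∈ blocks, cb.length = E)
    (c y : List Bool) (hc : c = hag t blocks)
    (J K : Finset ℕ) (hJc : J.card = td) (hKc : K.card = ti)
    (hy : y.length = c.length - td + ti ∧ del y K = del c J)
    (hJpos : J ⊆ Finset.Icc 1 c.length) (hKpos : K ⊆ Finset.Icc 1 y.length)
    -- the blocks marked as erased by Algorithm 1
    (Pe : Finset ℕ)
    (hPe : Pe = (Finset.Icc 1 N).filter (fun b =>
      uv E t τd τi y b ≠ uv E t τd τi y (b - 1)))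
    -- the unmarked blocks whose extracted block differs from the original
    (Ps : Finset ℕ)
    (hPs : Ps = (Finset.Icc 1 N).filter (fun b =>
      uv E t τd τi y b = uv E t τd τi y (b - 1) ∧
      extractBlock E t τd τi y b ≠ cBlock E t c b)) :
    Pe.card + 2 * Ps.card ≤ t ∧
    ∀ b ∈ Finset.Icc 1 N, b ∉ Pe ∪ Ps →
      extractBlock E t τd τi y b = cBlock E t c b :=
  stmt15_general N E t td ti r hr htdi τd τi hτd hτi blocks hNb hEb c y hc J K hJc hKc hy Pe hPe Ps
    hPs
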